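/- (a) If n ≡ 6 (mod 24), then the coefficient of t^k in C_n + C_{n−1} + C_{n−2} + C_{n−3} + C_{n−4} + C_{n−5} vanishes for all k > n−8, and likewise the coefficient of t^k in C_n + C_{n−1} + C_{n−2} + C_{n−3} vanishes for all k > n−8. (b) If n ≡ 18 (mod 24), then the coefficient of t^k in C_n + C_{n−1} vanishes for all k > n−8, and likewise the coefficient of t^k in C_n + C_{n−1} + C_{n−4} + C_{n−5} vanishes for all k > n−8. -/

import Mathlib

open Polynomial

noncomputable section

/-- The recurrence defining the polynomials `C_n` in `(ZMod 2)[t]`. -/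
def IsC (C : ℕ → Polynomial (ZMod 2)) : Prop :=
  C 0 = 0 ∧ C 1 = 1 ∧ C 2 = 1 ∧ C 3 = X ∧ C 4 = X ^ 2 ∧ C 5 = X ^ 4 + X ^ 2 + X ∧
  ∀ n : ℕ, C (n + 6) = C (n + 5) + (X ^ 6 + X ^ 5 + X ^ 2 + X) * C n + X ^ n * (X ^ 2 + X)

/-!
Put `c_n = t^n C_n(1/t)` (`revC C n`). Since `deg C_n ≤ n`, the coefficients of `C_n` in degrees
`> n - 8` are those of `c_n` in degrees `< 8`, and in the variable `u = 1/t` the recurrence becomes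
`c_{n+6} = u c_{n+5} + (1+u)^5 c_n + u^4 + u^5`. Modulo `u^8` this is a recurrence on 8-bit words
whose window of six consecutive values returns to its start after 48 steps (in characteristic 2,
`(z^6 + u z^5 + (1+u)^5)^8 ≡ z^48 + 1 mod u^8`, and `c - 1` solves the homogeneous recurrence).
So `c_n mod u^8` depends only on `n mod 48`, and each identity, a combination `∑ u^i c_{n-i}`,
is checked by evaluation at the two residues mod 48 allowed by `n mod 24`.
-/

section

variable {R : Type*} [Semiring R]

def LowBits (N : ℕ) (f : R[X]) (b : ℕ) : Prop :=
  ∀ i < N, f.coeff i = if b.testBit i then 1 else 0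

namespace LowBits

variable {N a b : ℕ} {f g : R[X]}

theorem zero (N : ℕ) : LowBits N (0 : R[X]) 0 := by
  simp [LowBits]

theorem one (N : ℕ) : LowBits N (1 : R[X]) 1 := by
  intro i _
  rcases i with _ | i <;> simp [coeff_one, Nat.testBit_succ]

theorem add [CharP R 2] (hf : LowBits N f a) (hg : LowBits N g b) :
    LowBits N (f + g) (a ^^^ b) := by
  intro i hi
  rw [coeff_add, hf i hi, hg i hi, Nat.testBit_xor]
  cases a.testBit i <;> cases b.testBit i <;> simp [CharTwo.add_self_eq_zero]

theorem X_pow_mul (hf : LowBits N f a) (k : ℕ) : LowBits N (X ^ k * f) (a <<< k) := by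
  intro i hi
  rw [Nat.testBit_shiftLeft, coeff_X_pow_mul']
  by_cases hk : k ≤ i
  · simp [hk, hf (i - k) (by omega)]
  · simp [hk]

theorem X_pow (N k : ℕ) : LowBits N (X ^ k : R[X]) (1 <<< k) := by
  simpa using (one N).X_pow_mul k

theorem list_sum [CharP R 2] {ι : Type*} {f : ι → R[X]} {b : ι → ℕ} :
    ∀ {I : List ι}, (∀ i ∈ I, LowBits N (f i) (b i)) →
      LowBits N (I.map f).sum ((I.map b).foldr (· ^^^ ·) 0)
  | [], _ => zero N
  | i :: _, h => by
    simpa using (h i List.mem_cons_self).add (list_sum fun j hj => h j (List.mem_cons_of_mem i hj))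

theorem mod_two_pow (hf : LowBits N f a) : LowBits N f (a % 2 ^ N) := by
  intro i hi
  simp [Nat.testBit_mod_two_pow, hi, hf i hi]

theorem X_pow_dvd (hf : LowBits N f 0) : X ^ N ∣ f :=
  X_pow_dvd_iff.2 fun i hi => by simp [hf i hi]

end LowBits

theorem reflect_add_of_natDegree_le {f : R[X]} {N : ℕ} (hf : f.natDegree ≤ N) (k : ℕ) :
    reflect (N + k) f = X ^ k * reflect N f := by
  rw [← mul_one f, reflect_mul f 1 hf (natDegree_one.trans_le k.zero_le), reflect_one, mul_one]
  exact X_pow_mul.symm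

theorem reflect_X (N : ℕ) : reflect (N + 1) (X : R[X]) = X ^ N := by
  simpa using reflect_monomial (R := R) (N + 1) 1

theorem coeff_eq_zero_of_X_pow_dvd_reflect {f : R[X]} {n N k : ℕ} (hf : f.natDegree ≤ n)
    (h : X ^ N ∣ reflect n f) (hk : n - N < k) : f.coeff k = 0 := by
  rcases le_or_gt k n with hkn | hkn
  · have := X_pow_dvd_iff.1 h (n - k) (by omega)
    rwa [coeff_reflect, revAt_le (Nat.sub_le n k), Nat.sub_sub_self hkn] at this
  · exact coeff_eq_zero_of_natDegree_lt (hf.trans_lt hkn)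

end

def revC (C : ℕ → (ZMod 2)[X]) (n : ℕ) : (ZMod 2)[X] := reflect n (C n)

/-- `revC C n` modulo `X ^ 8`, as the bits of a natural number (`IsC.lowBits_revC`). -/
def revCBits : ℕ → ℕ
  | 0 => 0
  | 1 => 1 <<< 1
  | 2 => 1 <<< 2
  | 3 => 1 <<< 2
  | 4 => 1 <<< 2
  | 5 => 1 <<< 1 ^^^ 1 <<< 3 ^^^ 1 <<< 4
  | n + 6 => (revCBits (n + 5) <<< 1 ^^^
      (revCBits n ^^^ revCBits n <<< 1 ^^^ revCBits n <<< 4 ^^^ revCBits n <<< 5) ^^^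
      (1 <<< 4 ^^^ 1 <<< 5)) % 2 ^ 8

theorem revCBits_add_six (n : ℕ) : revCBits (n + 6) = (revCBits (n + 5) <<< 1 ^^^
      (revCBits n ^^^ revCBits n <<< 1 ^^^ revCBits n <<< 4 ^^^ revCBits n <<< 5) ^^^
      (1 <<< 4 ^^^ 1 <<< 5)) % 2 ^ 8 := by
  rw [revCBits]

theorem revCBits_add_48 : ∀ n, revCBits (n + 48) = revCBits n
  | 0 | 1 | 2 | 3 | 4 | 5 => by decide +kernel
  | n + 6 => by
    rw [show n + 6 + 48 = n + 48 + 6 by omega, revCBits_add_six (n + 48), revCBits_add_six n,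
      show n + 48 + 5 = n + 5 + 48 by omega, revCBits_add_48 n, revCBits_add_48 (n + 5)]

theorem revCBits_sub_eq {n i : ℕ} (hi : i ≤ n % 48) :
    revCBits (n - i) = revCBits (n % 48 - i) := by
  rw [show n - i = n % 48 - i + 48 * (n / 48) by omega]
  induction n / 48 with
  | zero => rfl
  | succ q ih => rw [mul_add, ← add_assoc, revCBits_add_48, ih]

/-- The bitwise form of `X ^ 8 ∣ ∑ i ∈ I, X ^ i * revC C (r - i)`. -/
abbrev CancelsAt (I : List ℕ) (r : ℕ) : Prop :=
  (∀ i ∈ I, i ≤ r) ∧ (I.map fun i => revCBits (r - i) <<< i).foldr (· ^^^ ·) 0 % 2 ^ 8 = 0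

namespace IsC

variable {C : ℕ → (ZMod 2)[X]}

theorem add_six (hC : IsC C) (n : ℕ) :
    C (n + 6) = C (n + 5) + (X ^ 6 + X ^ 5 + X ^ 2 + X) * C n + X ^ n * (X ^ 2 + X) :=
  hC.2.2.2.2.2.2 n

theorem natDegree_le (hC : IsC C) : ∀ n, (C n).natDegree ≤ n
  | 0 => by simp [hC.1]
  | 1 => by simp [hC.2.1]
  | 2 => by simp [hC.2.2.1]
  | 3 => by simp [hC.2.2.2.1]
  | 4 => by simp [hC.2.2.2.2.1]
  | 5 => by rw [hC.2.2.2.2.2.1]; compute_degree!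
  | n + 6 => by
    rw [hC.add_six]
    refine natDegree_add_le_of_degree_le (natDegree_add_le_of_degree_le ?_ ?_) ?_
    · exact (hC.natDegree_le (n + 5)).trans (by omega)
    · exact (natDegree_mul_le_of_le (by compute_degree!) (hC.natDegree_le n)).trans (by omega)
    · compute_degree!

theorem revC_add_six (hC : IsC C) (n : ℕ) :
    revC C (n + 6) =
      X * revC C (n + 5) + (1 + X + X ^ 4 + X ^ 5) * revC C n + (X ^ 4 + X ^ 5) := by
  have hshift : reflect (n + 6) (C (n + 5)) = X * revC C (n + 5) := by
    have := reflect_add_of_natDegree_le (hC.natDegree_le (n + 5)) 1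
    rwa [pow_one] at this
  have hmul : reflect (n + 6) ((X ^ 6 + X ^ 5 + X ^ 2 + X) * C n) =
      (1 + X + X ^ 4 + X ^ 5) * revC C n := by
    rw [add_comm n, reflect_mul _ _ (by compute_degree!) (hC.natDegree_le n)]
    simp [revC, reflect_add, revAt_le, reflect_X 5]
  have hforce : reflect (n + 6) (X ^ n * (X ^ 2 + X) : (ZMod 2)[X]) = X ^ 4 + X ^ 5 := by
    rw [show X ^ n * (X ^ 2 + X : (ZMod 2)[X]) = X ^ (n + 2) + X ^ (n + 1) by ring]
    simp [reflect_add, revAt_le]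
  rw [revC, hC.add_six, reflect_add, reflect_add, hshift, hmul, hforce]

theorem revC_zero (hC : IsC C) : revC C 0 = 0 := by simp [revC, hC.1]

theorem revC_one (hC : IsC C) : revC C 1 = X := by simp [revC, hC.2.1]

theorem revC_two (hC : IsC C) : revC C 2 = X ^ 2 := by simp [revC, hC.2.2.1]

theorem revC_three (hC : IsC C) : revC C 3 = X ^ 2 := by simp [revC, hC.2.2.2.1, reflect_X 2]

theorem revC_four (hC : IsC C) : revC C 4 = X ^ 2 := by simp [revC, hC.2.2.2.2.1, revAt_le]

theorem revC_five (hC : IsC C) : revC C 5 = X + X ^ 3 + X ^ 4 := by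
  simp [revC, hC.2.2.2.2.2.1, reflect_add, revAt_le, reflect_X 4]

theorem lowBits_revC (hC : IsC C) : ∀ n, LowBits 8 (revC C n) (revCBits n)
  | 0 => by simpa [hC.revC_zero, revCBits] using LowBits.zero 8
  | 1 => by simpa [hC.revC_one, revCBits] using LowBits.X_pow 8 1
  | 2 => by rw [hC.revC_two, revCBits]; exact LowBits.X_pow 8 2
  | 3 => by rw [hC.revC_three, revCBits]; exact LowBits.X_pow 8 2
  | 4 => by rw [hC.revC_four, revCBits]; exact LowBits.X_pow 8 2
  | 5 => by
    rw [hC.revC_five, revCBits]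
    simpa only [pow_one] using
      ((LowBits.X_pow 8 1).add (LowBits.X_pow 8 3)).add (LowBits.X_pow 8 4)
  | n + 6 => by
    have h5 := hC.lowBits_revC (n + 5)
    have h0 := hC.lowBits_revC n
    have h := ((h5.X_pow_mul 1).add (((h0.add (h0.X_pow_mul 1)).add (h0.X_pow_mul 4)).add
      (h0.X_pow_mul 5))).add ((LowBits.X_pow 8 4).add (LowBits.X_pow 8 5))
    rw [hC.revC_add_six, revCBits_add_six]
    convert h.mod_two_pow using 1
    ring

theorem natDegree_sum_C_sub_le (hC : IsC C) (n : ℕ) :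
    ∀ I : List ℕ, (I.map fun i => C (n - i)).sum.natDegree ≤ n
  | [] => by simp
  | i :: I => by
    simpa using natDegree_add_le_of_degree_le ((hC.natDegree_le (n - i)).trans (Nat.sub_le n i))
      (hC.natDegree_sum_C_sub_le n I)

theorem reflect_sum_C_sub (hC : IsC C) {n : ℕ} :
    ∀ {I : List ℕ}, (∀ i ∈ I, i ≤ n) →
      reflect n (I.map fun i => C (n - i)).sum = (I.map fun i => X ^ i * revC C (n - i)).sum
  | [], _ => by simp
  | i :: _, hI => by
    have hshift := reflect_add_of_natDegree_le (hC.natDegree_le (n - i)) i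
    rw [Nat.sub_add_cancel (hI i List.mem_cons_self)] at hshift
    simp only [List.map_cons, List.sum_cons, reflect_add, hshift,
      hC.reflect_sum_C_sub fun j hj => hI j (List.mem_cons_of_mem i hj)]
    rfl

theorem coeff_sum_C_sub_eq_zero (hC : IsC C) {I : List ℕ} {n : ℕ} (hI : CancelsAt I (n % 48))
    {k : ℕ} (hk : n - 8 < k) : (I.map fun i => C (n - i)).sum.coeff k = 0 := by
  obtain ⟨hle, hcancel⟩ := hI
  refine coeff_eq_zero_of_X_pow_dvd_reflect (hC.natDegree_sum_C_sub_le n I) ?_ hk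
  have hbits := LowBits.list_sum (I := I) (f := fun i => X ^ i * revC C (n - i))
    (b := fun i => revCBits (n % 48 - i) <<< i) fun i hi => by
      simpa only [revCBits_sub_eq (hle i hi)] using (hC.lowBits_revC (n - i)).X_pow_mul i
  rw [hC.reflect_sum_C_sub fun i hi => (hle i hi).trans (Nat.mod_le n 48)]
  exact (hcancel ▸ hbits.mod_two_pow).X_pow_dvd

end IsC

theorem C_coeff_bounds' (C : ℕ → Polynomial (ZMod 2)) (hC : IsC C) (n : ℕ) :
    (n % 24 = 6 →
      (∀ k : ℕ, n - 8 < k →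
        (C n + C (n - 1) + C (n - 2) + C (n - 3) + C (n - 4) + C (n - 5)).coeff k = 0) ∧
      (∀ k : ℕ, n - 8 < k → (C n + C (n - 1) + C (n - 2) + C (n - 3)).coeff k = 0)) ∧
    (n % 24 = 18 →
      (∀ k : ℕ, n - 8 < k → (C n + C (n - 1)).coeff k = 0) ∧
      (∀ k : ℕ, n - 8 < k → (C n + C (n - 1) + C (n - 4) + C (n - 5)).coeff k = 0)) := by
  have hsum {I : List ℕ} {r₁ r₂ : ℕ} (hr : n % 48 = r₁ ∨ n % 48 = r₂)
      (hI : CancelsAt I r₁ ∧ CancelsAt I r₂) {k : ℕ} (hk : n - 8 < k) :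
      (I.map fun i => C (n - i)).sum.coeff k = 0 :=
    hC.coeff_sum_C_sub_eq_zero (hr.elim (· ▸ hI.1) (· ▸ hI.2)) hk
  refine ⟨fun h6 => ?_, fun h18 => ?_⟩
  · have hr : n % 48 = 6 ∨ n % 48 = 30 := by omega
    refine ⟨fun k hk => ?_, fun k hk => ?_⟩
    · simpa [add_assoc] using hsum (I := [0, 1, 2, 3, 4, 5]) hr (by decide +kernel) hk
    · simpa [add_assoc] using hsum (I := [0, 1, 2, 3]) hr (by decide +kernel) hk
  · have hr : n % 48 = 18 ∨ n % 48 = 42 := by omega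
    refine ⟨fun k hk => ?_, fun k hk => ?_⟩
    · simpa [add_assoc] using hsum (I := [0, 1]) hr (by decide +kernel) hk
    · simpa [add_assoc] using hsum (I := [0, 1, 4, 5]) hr (by decide +kernel) hk

end
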